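/- Under the K-user deterministic design, for any two indices j < j' in {1, …, r}, the rank over 𝔽₂ of the horizontal concatenation [S^{q − n_j} G_j | S^{q − n_{j'}} G_{j'}] equals rank(S^{q − n_j} G_j) + rank(S^{q − n_{j'}} G_{j'}) = m_j + m_{j'}, where S is the q × q down-shift matrix. -/

import Mathlib

/-! Left multiplication by `S^p` moves the nonzero block of a block matrix down by `p` rows, so
`S^{q - n_j} G_j` carries the invertible block `F_j` in the rows from `q - Σ_{i ≥ j} m_i` to
`q - Σ_{i > j} m_i - 1`. For `j < j'` the block of `j'` starts at row
`q - Σ_{i ≥ j'} m_i ≥ q - Σ_{i > j} m_i`, i.e. strictly below that of `j`. Restricting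
`[S^{q - n_j} G_j | S^{q - n_{j'}} G_{j'}]` to the rows of both blocks gives the invertible
block-diagonal matrix `diag(F_j, F_{j'})`, so the concatenation has full column rank
`m_j + m_{j'}`. -/

noncomputable section

/-- The `q × q` down-shift matrix over `𝔽₂`: `S i j = 1` iff `i = j + 1`. -/
def shiftMatrix (q : ℕ) : Matrix (Fin q) (Fin q) (ZMod 2) :=
  Matrix.of fun i j => if (i : ℕ) = (j : ℕ) + 1 then 1 else 0

/-- The `q × mm` vertical block matrix whose rows `off, …, off + mm - 1` form `F`
and whose other rows are zero. -/
def blockAt (q mm off : ℕ) (F : Matrix (Fin mm) (Fin mm) (ZMod 2)) :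
    Matrix (Fin q) (Fin mm) (ZMod 2) :=
  Matrix.of fun i j =>
    if h : off ≤ (i : ℕ) ∧ (i : ℕ) < off + mm then F ⟨(i : ℕ) - off, by omega⟩ j else 0

/-- The generator matrix `G_j` of the `K`-user deterministic design: the `q × m_j`
vertical block matrix `[0^{(n_j − Σ_{i≥j} m_i) × m_j}; F_j; 0^{(Σ_{i>j} m_i) × m_j};
0^{(q − n_j) × m_j}]`. -/
def Gmat {r : ℕ} (n m : Fin r → ℕ) (q : ℕ)
    (F : ∀ j : Fin r, Matrix (Fin (m j)) (Fin (m j)) (ZMod 2)) (j : Fin r) :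
    Matrix (Fin q) (Fin (m j)) (ZMod 2) :=
  blockAt q (m j) (n j - ∑ i ∈ Finset.Ici j, m i) (F j)

open Matrix

lemma shiftMatrix_mul_apply {c : Type*} {q : ℕ} (M : Matrix (Fin q) c (ZMod 2)) (i : Fin q)
    (x : c) :
    (shiftMatrix q * M) i x = if h : 1 ≤ (i : ℕ) then M ⟨i - 1, by omega⟩ x else 0 := by
  rw [mul_apply]
  split_ifs with h
  · rw [Finset.sum_eq_single ⟨i - 1, by omega⟩]
    · simp only [shiftMatrix, of_apply]
      rw [if_pos (by omega), one_mul]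
    · intro k _ hk
      simp only [shiftMatrix, of_apply, ite_mul, one_mul, zero_mul]
      exact if_neg fun hik => hk (Fin.ext (by simp only; omega))
    · simp
  · refine Finset.sum_eq_zero fun k _ => ?_
    simp only [shiftMatrix, of_apply, ite_mul, one_mul, zero_mul]
    exact if_neg (by omega)

lemma shiftMatrix_pow_mul_apply {c : Type*} {q : ℕ} (p : ℕ) (M : Matrix (Fin q) c (ZMod 2))
    (i : Fin q) (x : c) :
    (shiftMatrix q ^ p * M) i x = if h : p ≤ (i : ℕ) then M ⟨i - p, by omega⟩ x else 0 := by
  induction p generalizing i with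
  | zero => simp
  | succ p ih =>
    rw [pow_succ', Matrix.mul_assoc, shiftMatrix_mul_apply]
    split_ifs with h₁ h₂
    · rw [ih, dif_pos (by simp only; omega)]
      simp only [Nat.sub_sub, Nat.add_comm 1 p]
    · rw [ih, dif_neg (by simp only; omega)]
    all_goals first | rfl | omega

lemma blockAt_apply_add {q mm off : ℕ} (F : Matrix (Fin mm) (Fin mm) (ZMod 2)) (k x : Fin mm)
    (h : off + mm ≤ q) : blockAt q mm off F ⟨off + k, by omega⟩ x = F k x := by
  simp [blockAt]

lemma blockAt_apply_of_lt {q mm off : ℕ} (F : Matrix (Fin mm) (Fin mm) (ZMod 2)) (i : Fin q)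
    (x : Fin mm) (h : (i : ℕ) < off) : blockAt q mm off F i x = 0 :=
  dif_neg (by omega)

lemma blockAt_apply_of_le {q mm off : ℕ} (F : Matrix (Fin mm) (Fin mm) (ZMod 2)) (i : Fin q)
    (x : Fin mm) (h : off + mm ≤ (i : ℕ)) : blockAt q mm off F i x = 0 :=
  dif_neg (by omega)

lemma shiftMatrix_pow_mul_blockAt (q mm off p : ℕ) (F : Matrix (Fin mm) (Fin mm) (ZMod 2)) :
    shiftMatrix q ^ p * blockAt q mm off F = blockAt q mm (off + p) F := by
  ext i x
  rw [shiftMatrix_pow_mul_apply]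
  simp only [blockAt, of_apply]
  split_ifs <;> first | rfl | omega | exact congrArg (F · x) (Fin.ext (by simp only; omega))

lemma rank_eq_card_width_of_isUnit_submatrix {R m n : Type*} [CommSemiring R] [StrongRankCondition R]
    [Fintype n] [DecidableEq n]
    (M : Matrix m n R) (f : n → m) (h : IsUnit (M.submatrix f id)) :
    M.rank = Fintype.card n :=
  le_antisymm M.rank_le_card_width <|
    (rank_of_isUnit _ h).symm.le.trans (M.rank_submatrix_le f id)

lemma rank_blockAt {q mm off : ℕ} {F : Matrix (Fin mm) (Fin mm) (ZMod 2)} (hF : IsUnit F)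
    (h : off + mm ≤ q) : (blockAt q mm off F).rank = mm := by
  have hsub :
      (blockAt q mm off F).submatrix (fun k : Fin mm => (⟨off + k, by omega⟩ : Fin q)) id = F := by
    ext k x
    exact blockAt_apply_add F k x h
  exact (rank_eq_card_width_of_isUnit_submatrix _ _ (by rwa [hsub])).trans (Fintype.card_fin mm)

lemma rank_fromCols_blockAt {q mm mm' off off' : ℕ} {F : Matrix (Fin mm) (Fin mm) (ZMod 2)}
    {F' : Matrix (Fin mm') (Fin mm') (ZMod 2)} (hF : IsUnit F) (hF' : IsUnit F')
    (h : off + mm ≤ off') (h' : off' + mm' ≤ q) :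
    (fromCols (blockAt q mm off F) (blockAt q mm' off' F')).rank = mm + mm' := by
  let rows : Fin mm ⊕ Fin mm' → Fin q :=
    Sum.elim (fun k => ⟨off + k, by omega⟩) (fun k => ⟨off' + k, by omega⟩)
  have hsub : (fromCols (blockAt q mm off F) (blockAt q mm' off' F')).submatrix rows id =
      fromBlocks F 0 0 F' := by
    ext (k | k) (x | x)
    · exact blockAt_apply_add F k x (by omega)
    · exact blockAt_apply_of_lt F' _ x (by simp only [rows, Sum.elim_inl]; omega)
    · exact blockAt_apply_of_le F _ x (by simp only [rows, Sum.elim_inr]; omega)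
    · exact blockAt_apply_add F' k x h'
  have hunit : IsUnit (fromBlocks F 0 0 F') := isUnit_fromBlocks_zero₂₁.mpr ⟨hF, hF'⟩
  exact (rank_eq_card_width_of_isUnit_submatrix _ rows (by rwa [hsub])).trans (by simp)

lemma sum_Ici_add_le_sum_Ici {α : Type*} [PartialOrder α] [LocallyFiniteOrderTop α]
    (m : α → ℕ) {j j' : α} (h : j < j') :
    (∑ i ∈ Finset.Ici j', m i) + m j ≤ ∑ i ∈ Finset.Ici j, m i := by
  rw [← Finset.sum_Ioi_add_eq_sum_Ici (f := m) (a := j)]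
  gcongr
  exact fun x hx => Finset.mem_Ioi.mpr (h.trans_le (Finset.mem_Ici.mp hx))

lemma shiftMatrix_pow_mul_Gmat {r : ℕ} (n m : Fin r → ℕ) {q : ℕ}
    (F : ∀ j : Fin r, Matrix (Fin (m j)) (Fin (m j)) (ZMod 2)) (j : Fin r) (hq : n j ≤ q)
    (hm : ∑ i ∈ Finset.Ici j, m i ≤ n j) :
    shiftMatrix q ^ (q - n j) * Gmat n m q F j =
      blockAt q (m j) (q - ∑ i ∈ Finset.Ici j, m i) (F j) := by
  rw [Gmat, shiftMatrix_pow_mul_blockAt]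
  congr 1
  omega

theorem rank_concat_pair (r : ℕ) (hr : 1 ≤ r) (n : Fin r → ℕ)
    (hanti : ∀ i j : Fin r, i ≤ j → n j ≤ n i) (q : ℕ) (hq : q = n ⟨0, hr⟩)
    (m : Fin r → ℕ) (hm : ∀ j : Fin r, (∑ i ∈ Finset.Ici j, m i) ≤ n j)
    (F : ∀ j : Fin r, Matrix (Fin (m j)) (Fin (m j)) (ZMod 2))
    (hF : ∀ j, IsUnit (F j)) (j j' : Fin r) (hjj' : j < j') :
    (Matrix.fromCols
        (shiftMatrix q ^ (q - n j) * Gmat n m q F j)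
        (shiftMatrix q ^ (q - n j') * Gmat n m q F j')).rank
      = (shiftMatrix q ^ (q - n j) * Gmat n m q F j).rank
        + (shiftMatrix q ^ (q - n j') * Gmat n m q F j').rank ∧
    (shiftMatrix q ^ (q - n j) * Gmat n m q F j).rank
        + (shiftMatrix q ^ (q - n j') * Gmat n m q F j').rank = m j + m j' := by
  have hnq : ∀ k, n k ≤ q := fun k => hq ▸ hanti _ k (Fin.mk_le_of_le_val (Nat.zero_le _))
  have hdisj := sum_Ici_add_le_sum_Ici m hjj'
  have hmj' : m j' ≤ ∑ i ∈ Finset.Ici j', m i :=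
    Finset.single_le_sum (fun _ _ => Nat.zero_le _) (Finset.mem_Ici.mpr le_rfl)
  have hmj := hm j
  have hnj := hnq j
  rw [shiftMatrix_pow_mul_Gmat n m F j hnj hmj, shiftMatrix_pow_mul_Gmat n m F j' (hnq j') (hm j'),
    rank_fromCols_blockAt (hF j) (hF j') (by omega) (by omega),
    rank_blockAt (hF j) (by omega), rank_blockAt (hF j') (by omega)]
  exact ⟨rfl, rfl⟩
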